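/- arXiv:2605.24177 — 5 statements merged into one kernel-verified Lean document; each statement's English description precedes it below -/
import Mathlib

section
/- Let (X_i,Z_i) and (X_j,Z_j) be two independent, identically distributed random pairs with values in {0,1}² and common joint probability mass function ψ. Set p^X = ψ(1,0)+ψ(1,1), p^Z = ψ(0,1)+ψ(1,1), and κ = ψ(1,1) − p^X·p^Z. Then, conditionally on the event Z_i = Z_j (assumed to have positive probability), the total variation distance between the conditional joint law of (X_i,X_j) and the product of its conditional marginals equals 2κ² / ((1−p^Z)² + (p^Z)²)². -/
open Finset

/-- Let `(X_i, Z_i)` and `(X_j, Z_j)` be two independent,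
identically distributed random pairs with values in `{0,1}²` and common joint pmf
`ψ`.  With `p^X = ψ(1,0) + ψ(1,1)`, `p^Z = ψ(0,1) + ψ(1,1)` and
`κ = ψ(1,1) - p^X·p^Z`, and conditionally on the event `Z_i = Z_j` (assumed to have
positive probability, which equals `Peq = (1-p^Z)² + (p^Z)²`), the total variation
distance between the conditional joint law of `(X_i, X_j)` and the product of its
conditional marginals equals `2κ² / ((1-p^Z)² + (p^Z)²)²`.

Here `ψ x z` is the probability of the pair `(x, z)` (`true = 1`, `false = 0`);
`(∑ z, ψ x z * ψ y z) / Peq` is the conditional probability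
`P(X_i = x, X_j = y | Z_i = Z_j)`, and the conditional marginals are obtained by
summing out the other coordinate. -/
theorem cavity_discrepancy_even
    (ψ : Bool → Bool → ℝ)
    (hpos : ∀ x z, 0 ≤ ψ x z)
    (hsum : ∑ x : Bool, ∑ z : Bool, ψ x z = 1)
    (pX pZ κ Peq : ℝ)
    (hpX : pX = ψ true false + ψ true true)
    (hpZ : pZ = ψ false true + ψ true true)
    (hκ : κ = ψ true true - pX * pZ)
    (hPeq : Peq = ∑ x : Bool, ∑ y : Bool, ∑ z : Bool, ψ x z * ψ y z)
    (hPeqpos : 0 < Peq) :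
    (1 / 2) * ∑ x : Bool, ∑ y : Bool,
        |(∑ z : Bool, ψ x z * ψ y z) / Peq -
            ((∑ y' : Bool, ∑ z : Bool, ψ x z * ψ y' z) / Peq) *
              ((∑ x' : Bool, ∑ z : Bool, ψ x' z * ψ y z) / Peq)| =
      2 * κ ^ 2 / ((1 - pZ) ^ 2 + pZ ^ 2) ^ 2 := by
  have hne : Peq ≠ 0 := ne_of_gt hPeqpos
  have hP2 : (0:ℝ) < Peq ^ 2 := by positivity
  have ha : ψ false false = 1 - ψ false true - ψ true false - ψ true true := by
    simp only [Fintype.sum_bool] at hsum; linarith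
  have hPeq' : Peq = (1 - pZ) ^ 2 + pZ ^ 2 := by
    simp only [Fintype.sum_bool] at hPeq
    rw [hPeq, ha, hpZ]; ring
  have key : ∀ A B C : ℝ, A / Peq - B / Peq * (C / Peq) = (A * Peq - B * C) / Peq ^ 2 := by
    intro A B C; field_simp
  simp only [Fintype.sum_bool, key]
  simp only [Fintype.sum_bool] at hPeq
  rw [← hPeq']
  have habs : ∀ N : ℝ, |N / Peq ^ 2| = |N| / Peq ^ 2 := by
    intro N; rw [abs_div, abs_of_pos hP2]
  simp only [habs]
  have hk2 : |κ ^ 2| = κ ^ 2 := abs_of_nonneg (sq_nonneg κ)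
  have e1 : (ψ true true * ψ true true + ψ true false * ψ true false) * Peq -
      (ψ true true * ψ true true + ψ true false * ψ true false +
        (ψ true true * ψ false true + ψ true false * ψ false false)) *
      (ψ true true * ψ true true + ψ true false * ψ true false +
        (ψ false true * ψ true true + ψ false false * ψ true false)) = κ ^ 2 := by
    rw [hPeq, hκ, hpX, hpZ, ha]; ring
  have e2 : (ψ true true * ψ false true + ψ true false * ψ false false) * Peq -
      (ψ true true * ψ true true + ψ true false * ψ true false +
        (ψ true true * ψ false true + ψ true false * ψ false false)) *
      (ψ true true * ψ false true + ψ true false * ψ false false +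
        (ψ false true * ψ false true + ψ false false * ψ false false)) = -κ ^ 2 := by
    rw [hPeq, hκ, hpX, hpZ, ha]; ring
  have e3 : (ψ false true * ψ true true + ψ false false * ψ true false) * Peq -
      (ψ false true * ψ true true + ψ false false * ψ true false +
        (ψ false true * ψ false true + ψ false false * ψ false false)) *
      (ψ true true * ψ true true + ψ true false * ψ true false +
        (ψ false true * ψ true true + ψ false false * ψ true false)) = -κ ^ 2 := by
    rw [hPeq, hκ, hpX, hpZ, ha]; ring
  have e4 : (ψ false true * ψ false true + ψ false false * ψ false false) * Peq -
      (ψ false true * ψ true true + ψ false false * ψ true false +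
        (ψ false true * ψ false true + ψ false false * ψ false false)) *
      (ψ true true * ψ false true + ψ true false * ψ false false +
        (ψ false true * ψ false true + ψ false false * ψ false false)) = κ ^ 2 := by
    rw [hPeq, hκ, hpX, hpZ, ha]; ring
  rw [e1, e2, e3, e4, abs_neg, hk2]
  ring
end

section
/- Let (X_i,Z_i) and (X_j,Z_j) be two independent, identically distributed random pairs with values in {0,1}² and common joint probability mass function ψ. Set p^X = ψ(1,0)+ψ(1,1), p^Z = ψ(0,1)+ψ(1,1), and κ = ψ(1,1) − p^X·p^Z, and assume 0 < p^Z < 1. Then, conditionally on the event Z_i ≠ Z_j, the total variation distance between the conditional joint law of (X_i,X_j) and the product of its conditional marginals equals 2κ² / (2·p^Z·(1−p^Z))². -/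
/-!
Write `m x y = ∑ z, ψ x z * ψ y (!z)` for the (unnormalised) joint weight of `(X_i, X_j)` on
`Z_i ≠ Z_j`. In any `2 × 2` table, each entry's deviation from the product of its marginals is
`± det m / N²`, where `N` is the total mass, so the total variation distance from independence is
`2 |det m| / N²`. For this particular table `det m = -(det ψ)²` and `N = 2 p^Z (1 - p^Z)`,
while `det ψ = κ` because `ψ` has total mass one.
-/

open Finset

namespace BoolTable

variable {K : Type*}

def det [CommRing K] (m : Bool → Bool → K) : K :=
  m true true * m false false - m true false * m false true

def total [AddCommMonoid K] (m : Bool → Bool → K) : K :=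
  ∑ x, ∑ y, m x y

theorem entry_mul_total_sub_marginals [CommRing K] (m : Bool → Bool → K) (x y : Bool) :
    m x y * total m - (∑ y', m x y') * ∑ x', m x' y = (if x = y then 1 else -1) * det m := by
  cases x <;> cases y <;> simp only [total, det, Fintype.sum_bool] <;> norm_num <;> ring

theorem div_total_sub_marginals [Field K] (m : Bool → Bool → K) (x y : Bool) :
    m x y / total m - (∑ y', m x y') / total m * ((∑ x', m x' y) / total m) =
      (if x = y then 1 else -1) * det m / total m ^ 2 := by
  rw [← entry_mul_total_sub_marginals]
  rcases eq_or_ne (total m) 0 with h | h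
  · simp [h]
  · field_simp

theorem half_sum_abs_sub_marginals [Field K] [LinearOrder K] [IsStrictOrderedRing K]
    (m : Bool → Bool → K) :
    (1 / 2) * ∑ x, ∑ y,
        |m x y / total m - (∑ y', m x y') / total m * ((∑ x', m x' y) / total m)| =
      2 * |det m| / total m ^ 2 := by
  have h (x y : Bool) :
      |m x y / total m - (∑ y', m x y') / total m * ((∑ x', m x' y) / total m)| =
        |det m| / total m ^ 2 := by
    rw [div_total_sub_marginals, abs_div, abs_mul, abs_of_nonneg (sq_nonneg (total m))]
    split_ifs <;> simp
  simp only [h, sum_const, card_univ, Fintype.card_bool]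
  ring

variable [CommRing K] (ψ : Bool → Bool → K)

theorem det_antidiagonal : det (fun x y => ∑ z, ψ x z * ψ y (!z)) = -det ψ ^ 2 := by
  simp only [det, Fintype.sum_bool, Bool.not_true, Bool.not_false]
  ring

theorem total_antidiagonal :
    total (fun x y => ∑ z, ψ x z * ψ y (!z)) =
      2 * (∑ x, ψ x false) * ∑ x, ψ x true := by
  simp only [total, Fintype.sum_bool, Bool.not_true, Bool.not_false]
  ring

theorem det_eq_sub_mul_marginals (hψ : total ψ = 1) :
    det ψ = ψ true true - (ψ true false + ψ true true) * (ψ false true + ψ true true) := by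
  simp only [total, det, Fintype.sum_bool] at hψ ⊢
  linear_combination ψ true true * hψ

end BoolTable

open BoolTable in
/-- `(∑ z, ψ x z * ψ y (!z)) / Pneq` is `P(X_i = x, X_j = y | Z_i ≠ Z_j)`. -/
theorem cavity_discrepancy_odd_general
    (ψ : Bool → Bool → ℝ)
    (hsum : ∑ x : Bool, ∑ z : Bool, ψ x z = 1)
    (pX pZ κ Pneq : ℝ)
    (hpX : pX = ψ true false + ψ true true)
    (hpZ : pZ = ψ false true + ψ true true)
    (hκ : κ = ψ true true - pX * pZ)
    (hPneq : Pneq = ∑ x : Bool, ∑ y : Bool, ∑ z : Bool, ψ x z * ψ y (!z)) :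
    (1 / 2) * ∑ x : Bool, ∑ y : Bool,
        |(∑ z : Bool, ψ x z * ψ y (!z)) / Pneq -
            ((∑ y' : Bool, ∑ z : Bool, ψ x z * ψ y' (!z)) / Pneq) *
              ((∑ x' : Bool, ∑ z : Bool, ψ x' z * ψ y (!z)) / Pneq)| =
      2 * κ ^ 2 / (2 * pZ * (1 - pZ)) ^ 2 := by
  have hκ_det : κ = det ψ := by rw [hκ, hpX, hpZ, det_eq_sub_mul_marginals ψ hsum]
  have hψ_false : ∑ x, ψ x false = 1 - pZ := by
    simp only [Fintype.sum_bool] at hsum ⊢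
    linarith
  have h_total : total (fun x y => ∑ z, ψ x z * ψ y (!z)) = 2 * pZ * (1 - pZ) := by
    rw [total_antidiagonal, hψ_false, hpZ, Fintype.sum_bool]
    ring
  subst hPneq
  refine (half_sum_abs_sub_marginals (fun x y => ∑ z, ψ x z * ψ y (!z))).trans ?_
  rw [det_antidiagonal, abs_neg, abs_of_nonneg (sq_nonneg _), ← hκ_det, h_total]

/-- Let `(X_i, Z_i)` and `(X_j, Z_j)` be two independent,
identically distributed random pairs with values in `{0,1}²` and common joint pmf
`ψ`.  With `p^X = ψ(1,0) + ψ(1,1)`, `p^Z = ψ(0,1) + ψ(1,1)`,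
`κ = ψ(1,1) - p^X·p^Z`, and `0 < p^Z < 1` (so that the event `Z_i ≠ Z_j` has positive
probability `Pneq = 2p^Z(1-p^Z)`), conditionally on `Z_i ≠ Z_j` the total variation
distance between the conditional joint law of `(X_i, X_j)` and the product of its
conditional marginals equals `2κ² / (2p^Z(1-p^Z))²`.

Here `(∑ z, ψ x z * ψ y (!z)) / Pneq` is the conditional probability
`P(X_i = x, X_j = y | Z_i ≠ Z_j)`, and the conditional marginals are obtained by
summing out the other coordinate. -/
theorem cavity_discrepancy_odd
    (ψ : Bool → Bool → ℝ)
    (hpos : ∀ x z, 0 ≤ ψ x z)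
    (hsum : ∑ x : Bool, ∑ z : Bool, ψ x z = 1)
    (pX pZ κ Pneq : ℝ)
    (hpX : pX = ψ true false + ψ true true)
    (hpZ : pZ = ψ false true + ψ true true)
    (hκ : κ = ψ true true - pX * pZ)
    (hPneq : Pneq = ∑ x : Bool, ∑ y : Bool, ∑ z : Bool, ψ x z * ψ y (!z))
    (hpZ0 : 0 < pZ) (hpZ1 : pZ < 1) :
    (1 / 2) * ∑ x : Bool, ∑ y : Bool,
        |(∑ z : Bool, ψ x z * ψ y (!z)) / Pneq -
            ((∑ y' : Bool, ∑ z : Bool, ψ x z * ψ y' (!z)) / Pneq) *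
              ((∑ x' : Bool, ∑ z : Bool, ψ x' z * ψ y (!z)) / Pneq)| =
      2 * κ ^ 2 / (2 * pZ * (1 - pZ)) ^ 2 :=
  cavity_discrepancy_odd_general ψ hsum pX pZ κ Pneq hpX hpZ hκ hPneq
end

section
/- Let (X_i,Z_i) and (X_j,Z_j) be two independent, identically distributed random pairs with values in {0,1}² and common joint probability mass function ψ, with p^X = ψ(1,0)+ψ(1,1), p^Z = ψ(0,1)+ψ(1,1), 0 < p^Z < 1, and κ = ψ(1,1) − p^X·p^Z. Then the following are equivalent: (i) κ = 0, i.e., the X- and Z-components of a single pair are independent; (ii) conditionally on Z_i = Z_j, the variables X_i and X_j are independent; (iii) conditionally on Z_i ≠ Z_j, the variables X_i and X_j are independent. -/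
open Finset

/-- Let `(X_i, Z_i)` and `(X_j, Z_j)` be two independent,
identically distributed random pairs with values in `{0,1}²` and common joint pmf
`ψ`, with `p^X = ψ(1,0) + ψ(1,1)`, `p^Z = ψ(0,1) + ψ(1,1)`, `0 < p^Z < 1`, and
`κ = ψ(1,1) - p^X·p^Z`.  Then the following are equivalent:
(i) `κ = 0`, i.e. the `X`- and `Z`-components of a single pair are independent;
(ii) conditionally on `Z_i = Z_j`, the variables `X_i` and `X_j` are independent
(the conditional joint law equals the product of the conditional marginals);
(iii) conditionally on `Z_i ≠ Z_j`, the variables `X_i` and `X_j` are independent.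

The event `Z_i = Z_j` has probability `Peq` and the event `Z_i ≠ Z_j` has probability
`Pneq`; the conditional joint laws and marginals are written out explicitly. -/
theorem coupling_zero_iff_cond_indep
    (ψ : Bool → Bool → ℝ)
    (hpos : ∀ x z, 0 ≤ ψ x z)
    (hsum : ∑ x : Bool, ∑ z : Bool, ψ x z = 1)
    (pX pZ κ Peq Pneq : ℝ)
    (hpX : pX = ψ true false + ψ true true)
    (hpZ : pZ = ψ false true + ψ true true)
    (hκ : κ = ψ true true - pX * pZ)
    (hPeq : Peq = ∑ x : Bool, ∑ y : Bool, ∑ z : Bool, ψ x z * ψ y z)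
    (hPneq : Pneq = ∑ x : Bool, ∑ y : Bool, ∑ z : Bool, ψ x z * ψ y (!z))
    (hpZ0 : 0 < pZ) (hpZ1 : pZ < 1) :
    ((κ = 0) ↔
      (∀ x y : Bool,
        (∑ z : Bool, ψ x z * ψ y z) / Peq =
          ((∑ y' : Bool, ∑ z : Bool, ψ x z * ψ y' z) / Peq) *
            ((∑ x' : Bool, ∑ z : Bool, ψ x' z * ψ y z) / Peq))) ∧
    ((κ = 0) ↔
      (∀ x y : Bool,
        (∑ z : Bool, ψ x z * ψ y (!z)) / Pneq =
          ((∑ y' : Bool, ∑ z : Bool, ψ x z * ψ y' (!z)) / Pneq) *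
            ((∑ x' : Bool, ∑ z : Bool, ψ x' z * ψ y (!z)) / Pneq))) := by
  simp only [Fintype.sum_bool, Bool.not_true, Bool.not_false] at hsum hPeq hPneq ⊢
  have hPeq' : Peq = (ψ false false + ψ true false)^2 + (ψ false true + ψ true true)^2 := by
    rw [hPeq]; ring
  have hPneq' : Pneq = 2*(ψ false false + ψ true false)*(ψ false true + ψ true true) := by
    rw [hPneq]; ring
  have hcol1 : ψ false true + ψ true true = pZ := by linarith
  have hcol0 : ψ false false + ψ true false = 1 - pZ := by linarith
  have hPeqpos : 0 < Peq := by rw [hPeq', hcol0, hcol1]; nlinarith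
  have hPneqpos : 0 < Pneq := by rw [hPneq', hcol0, hcol1]; nlinarith
  have fac : κ = 0 → ∃ m n : Bool → ℝ, ∀ x z, ψ x z = m x * n z := by
    intro h0
    rw [hκ, hpX] at h0
    refine ⟨fun x => ψ x false + ψ x true, fun z => if z then pZ else 1 - pZ, ?_⟩
    intro x z
    cases x <;> cases z <;> simp only [Bool.false_eq_true, if_true, if_false]
    · linear_combination pZ*hsum + hpZ + h0
    · linear_combination -h0 - pZ*hsum - hpZ
    · linear_combination -h0
    · linear_combination h0
  have hck : ψ true false * (ψ false true + ψ true true)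
      - ψ true true * (ψ false false + ψ true false) = -κ := by
    rw [hκ, hpX, hpZ]; linear_combination (-(ψ true true))*hsum
  constructor
  · constructor
    · intro h0 x y
      obtain ⟨m, n, hfac⟩ := fac h0
      simp only [hfac] at hPeq' ⊢
      rw [hPeq'] at hPeqpos ⊢
      rw [div_mul_div_comm, div_eq_div_iff hPeqpos.ne' (mul_ne_zero hPeqpos.ne' hPeqpos.ne')]
      ring
    · intro h
      have H := h true true
      field_simp [hPeqpos.ne'] at H
      have hk2P : κ^2 * Peq = 0 := by
        linear_combination Peq*H - (ψ true true * ψ true true + ψ true false * ψ true false)*Peq*hPeq'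
          + (κ - (ψ true false * (ψ false true + ψ true true) - ψ true true * (ψ false false + ψ true false)))*Peq*hck
      have hk2 : κ^2 = 0 := by
        rcases mul_eq_zero.mp hk2P with h'|h'
        · exact h'
        · exact absurd h' hPeqpos.ne'
      exact pow_eq_zero_iff (two_ne_zero) |>.mp hk2
  · constructor
    · intro h0 x y
      obtain ⟨m, n, hfac⟩ := fac h0
      simp only [hfac] at hPneq' ⊢
      rw [hPneq'] at hPneqpos ⊢
      rw [div_mul_div_comm, div_eq_div_iff hPneqpos.ne' (mul_ne_zero hPneqpos.ne' hPneqpos.ne')]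
      ring
    · intro h
      have H := h true true
      field_simp [hPneqpos.ne'] at H
      have hk2P : κ^2 * Pneq = 0 := by
        linear_combination -(Pneq*H) + (ψ true true * ψ true false + ψ true false * ψ true true)*Pneq*hPneq'
          + (κ - (ψ true false * (ψ false true + ψ true true) - ψ true true * (ψ false false + ψ true false)))*Pneq*hck
      have hk2 : κ^2 = 0 := by
        rcases mul_eq_zero.mp hk2P with h'|h'
        · exact h'
        · exact absurd h' hPneqpos.ne'
      exact pow_eq_zero_iff (two_ne_zero) |>.mp hk2
end

section
/- Let (X_i,Z_i) and (X_j,Z_j) be two independent, identically distributed random pairs with values in {0,1}² and common joint pmf ψ; write p_{10} = ψ(1,0), p_{11} = ψ(1,1), p^Z = ψ(0,1)+ψ(1,1). Then the conditional covariance of X_i and X_j given the event Z_i = Z_j equals (p_{11}(1−p^Z) − p_{10}·p^Z)² / ((1−p^Z)² + (p^Z)²)². -/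
/-!
Write `u = P(Z = 0) = 1 - p^Z` and `v = P(Z = 1) = p^Z`. Conditioning on `Z_i = Z_j` divides by
`u² + v²`, so the covariance is `((c² + d²)(u² + v²) - (cu + dv)²) / (u² + v²)²` with
`c = p₁₀`, `d = p₁₁`, and Lagrange's identity turns the numerator into `(du - cv)²`.
-/

theorem sq_add_sq_mul_sq_add_sq_sub_sq {R : Type*} [CommRing R] (c d u v : R) :
    (c ^ 2 + d ^ 2) * (u ^ 2 + v ^ 2) - (c * u + d * v) ^ 2 = (c * v - d * u) ^ 2 := by
  ring

theorem div_sub_div_mul_div_self {K : Type*} [Field K] {P : K} (hP : P ≠ 0) (S T : K) :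
    S / P - T / P * (T / P) = (S * P - T ^ 2) / P ^ 2 := by
  field_simp

theorem sq_add_sq_pos_of_add_eq_one {R : Type*} [CommRing R] [LinearOrder R] [IsStrictOrderedRing R]
    {u v : R} (h : u + v = 1) : 0 < u ^ 2 + v ^ 2 := by
  nlinarith [sq_nonneg (u - v)]

theorem cond_cov_even_general
    (ψ : Bool → Bool → ℝ)
    (hsum : ∑ x : Bool, ∑ z : Bool, ψ x z = 1)
    (p10 p11 pZ Peq : ℝ)
    (hp10 : p10 = ψ true false)
    (hp11 : p11 = ψ true true)
    (hpZ : pZ = ψ false true + ψ true true)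
    (hPeq : Peq = ∑ x : Bool, ∑ y : Bool, ∑ z : Bool, ψ x z * ψ y z) :
    (∑ z : Bool, ψ true z * ψ true z) / Peq -
        ((∑ z : Bool, ψ true z * (∑ x : Bool, ψ x z)) / Peq) *
          ((∑ z : Bool, (∑ x : Bool, ψ x z) * ψ true z) / Peq) =
      (p11 * (1 - pZ) - p10 * pZ) ^ 2 / ((1 - pZ) ^ 2 + pZ ^ 2) ^ 2 := by
  simp only [Fintype.sum_bool] at hsum hPeq ⊢
  have hZ0 : ψ true false + ψ false false = 1 - pZ := by linarith
  have hZ1 : ψ true true + ψ false true = pZ := by rw [hpZ, add_comm]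
  have hPeq' : Peq = pZ ^ 2 + (1 - pZ) ^ 2 := by rw [hPeq, ← hZ0, ← hZ1]; ring
  have hP : Peq ≠ 0 := hPeq' ▸ (sq_add_sq_pos_of_add_eq_one (add_sub_cancel pZ 1)).ne'
  rw [hZ0, hZ1, mul_comm pZ, mul_comm (1 - pZ), div_sub_div_mul_div_self hP, ← sq, ← sq,
    hPeq', sq_add_sq_mul_sq_add_sq_sub_sq, add_comm (pZ ^ 2), hp10, hp11]

/-- Let `(X_i, Z_i)` and `(X_j, Z_j)` be two independent,
identically distributed random pairs with values in `{0,1}²` and common joint pmf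
`ψ`; write `p₁₀ = ψ(1,0)`, `p₁₁ = ψ(1,1)`, `p^Z = ψ(0,1) + ψ(1,1)`.  Then the
conditional covariance of `X_i` and `X_j` given the event `Z_i = Z_j` (which has
probability `Peq = (1-p^Z)² + (p^Z)² > 0`) equals
`(p₁₁(1-p^Z) - p₁₀·p^Z)² / ((1-p^Z)² + (p^Z)²)²`.

Here `P(X_i = 1, X_j = 1, Z_i = Z_j) = ∑ z, ψ(1,z)·ψ(1,z)` and
`P(X_i = 1, Z_i = Z_j) = ∑ z, ψ(1,z)·(∑ x, ψ(x,z))`, and the conditional covariance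
is `P(X_i=1, X_j=1 | E) - P(X_i=1 | E)·P(X_j=1 | E)`. -/
theorem cond_cov_even
    (ψ : Bool → Bool → ℝ)
    (hpos : ∀ x z, 0 ≤ ψ x z)
    (hsum : ∑ x : Bool, ∑ z : Bool, ψ x z = 1)
    (p10 p11 pZ Peq : ℝ)
    (hp10 : p10 = ψ true false)
    (hp11 : p11 = ψ true true)
    (hpZ : pZ = ψ false true + ψ true true)
    (hPeq : Peq = ∑ x : Bool, ∑ y : Bool, ∑ z : Bool, ψ x z * ψ y z) :
    (∑ z : Bool, ψ true z * ψ true z) / Peq -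
        ((∑ z : Bool, ψ true z * (∑ x : Bool, ψ x z)) / Peq) *
          ((∑ z : Bool, (∑ x : Bool, ψ x z) * ψ true z) / Peq) =
      (p11 * (1 - pZ) - p10 * pZ) ^ 2 / ((1 - pZ) ^ 2 + pZ ^ 2) ^ 2 :=
  cond_cov_even_general ψ hsum p10 p11 pZ Peq hp10 hp11 hpZ hPeq
end

section
/- Let (X_i,Z_i) and (X_j,Z_j) be two independent, identically distributed random pairs with values in {0,1}² and common joint pmf ψ; write p_{10} = ψ(1,0), p_{11} = ψ(1,1), p^Z = ψ(0,1)+ψ(1,1), and assume 0 < p^Z < 1. Then the conditional covariance of X_i and X_j given the event Z_i ≠ Z_j equals −(p_{11}(1−p^Z) − p_{10}·p^Z)² / (2·p^Z·(1−p^Z))²; in particular it is nonpositive. -/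
/-!
Writing `A`, `B = C` and `D` for the probabilities of `{X_i = X_j = 1, E}`, `{X_i = 1, E}` and
`E = {Z_i ≠ Z_j}`, the conditional covariance is `(A D - B²) / D²`. With `x = p₁₁(1 - p^Z)` and
`y = p₁₀ p^Z` one has `A D = 4xy` and `B = x + y`, so `A D - B² = -(x - y)²`.
-/

theorem div_sub_div_mul_div_eq_div_sq {K : Type*} [Field K] (a b c d : K) :
    a / d - b / d * (c / d) = (a * d - b * c) / d ^ 2 := by
  rcases eq_or_ne d 0 with rfl | hd
  · simp
  · field_simp

theorem Fintype.sum_bool_mul_not {R : Type*} [AddCommMonoid R] [Mul R] (f g : Bool → R) :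
    ∑ z : Bool, f z * g (!z) = f true * g false + f false * g true := by
  simp only [Fintype.sum_bool, Bool.not_true, Bool.not_false]

theorem Fintype.sum_sum_sum_mul_not {R : Type*} [CommSemiring R] (ψ : Bool → Bool → R) :
    ∑ x : Bool, ∑ y : Bool, ∑ z : Bool, ψ x z * ψ y (!z) =
      2 * (∑ x : Bool, ψ x true) * ∑ x : Bool, ψ x false := by
  simp only [Fintype.sum_bool, Bool.not_true, Bool.not_false]
  ring

theorem cond_cov_odd_general
    (ψ : Bool → Bool → ℝ)
    (hsum : ∑ x : Bool, ∑ z : Bool, ψ x z = 1)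
    (p10 p11 pZ Pneq : ℝ)
    (hp10 : p10 = ψ true false)
    (hp11 : p11 = ψ true true)
    (hpZ : pZ = ψ false true + ψ true true)
    (hPneq : Pneq = ∑ x : Bool, ∑ y : Bool, ∑ z : Bool, ψ x z * ψ y (!z)) :
    (∑ z : Bool, ψ true z * ψ true (!z)) / Pneq -
        ((∑ z : Bool, ψ true z * (∑ x : Bool, ψ x (!z))) / Pneq) *
          ((∑ z : Bool, (∑ x : Bool, ψ x z) * ψ true (!z)) / Pneq) =
      -((p11 * (1 - pZ) - p10 * pZ) ^ 2) / (2 * pZ * (1 - pZ)) ^ 2 ∧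
    (∑ z : Bool, ψ true z * ψ true (!z)) / Pneq -
        ((∑ z : Bool, ψ true z * (∑ x : Bool, ψ x (!z))) / Pneq) *
          ((∑ z : Bool, (∑ x : Bool, ψ x z) * ψ true (!z)) / Pneq) ≤ 0 := by
  have hZ : ∑ x : Bool, ψ x true = pZ := by
    rw [Fintype.sum_bool, hpZ, add_comm]
  have hZc : ∑ x : Bool, ψ x false = 1 - pZ := by
    rw [← hsum, ← hZ, Finset.sum_comm, Fintype.sum_bool (fun z ↦ ∑ x, ψ x z)]
    ring
  have hA : ∑ z : Bool, ψ true z * ψ true (!z) = 2 * p10 * p11 := by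
    rw [Fintype.sum_bool_mul_not, hp10, hp11]
    ring
  have hB : ∑ z : Bool, ψ true z * ∑ x : Bool, ψ x (!z) = p11 * (1 - pZ) + p10 * pZ := by
    rw [Fintype.sum_bool_mul_not (ψ true) (fun z ↦ ∑ x : Bool, ψ x z), hZ, hZc, hp10, hp11]
  have hC : ∑ z : Bool, (∑ x : Bool, ψ x z) * ψ true (!z) = p11 * (1 - pZ) + p10 * pZ := by
    rw [Fintype.sum_bool_mul_not (fun z ↦ ∑ x : Bool, ψ x z) (ψ true), hZ, hZc, hp10, hp11]
    ring
  have hD : Pneq = 2 * pZ * (1 - pZ) := by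
    rw [hPneq, Fintype.sum_sum_sum_mul_not, hZ, hZc]
  have hcov : (∑ z : Bool, ψ true z * ψ true (!z)) / Pneq -
        ((∑ z : Bool, ψ true z * (∑ x : Bool, ψ x (!z))) / Pneq) *
          ((∑ z : Bool, (∑ x : Bool, ψ x z) * ψ true (!z)) / Pneq) =
      -((p11 * (1 - pZ) - p10 * pZ) ^ 2) / (2 * pZ * (1 - pZ)) ^ 2 := by
    rw [hA, hB, hC, hD, div_sub_div_mul_div_eq_div_sq]
    ring
  exact ⟨hcov, hcov ▸ div_nonpos_of_nonpos_of_nonneg (neg_nonpos.2 (sq_nonneg _)) (sq_nonneg _)⟩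

/-- Let `(X_i, Z_i)` and `(X_j, Z_j)` be two independent,
identically distributed random pairs with values in `{0,1}²` and common joint pmf
`ψ`; write `p₁₀ = ψ(1,0)`, `p₁₁ = ψ(1,1)`, `p^Z = ψ(0,1) + ψ(1,1)`, and assume
`0 < p^Z < 1`.  Then the conditional covariance of `X_i` and `X_j` given the event
`Z_i ≠ Z_j` (which has probability `Pneq = 2p^Z(1-p^Z) > 0`) equals
`-(p₁₁(1-p^Z) - p₁₀·p^Z)² / (2p^Z(1-p^Z))²`; in particular it is nonpositive.

Here `P(X_i = 1, X_j = 1, Z_i ≠ Z_j) = ∑ z, ψ(1,z)·ψ(1,!z)` and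
`P(X_i = 1, Z_i ≠ Z_j) = ∑ z, ψ(1,z)·(∑ x, ψ(x,!z))`, and the conditional covariance
is `P(X_i=1, X_j=1 | E) - P(X_i=1 | E)·P(X_j=1 | E)`. -/
theorem cond_cov_odd
    (ψ : Bool → Bool → ℝ)
    (hpos : ∀ x z, 0 ≤ ψ x z)
    (hsum : ∑ x : Bool, ∑ z : Bool, ψ x z = 1)
    (p10 p11 pZ Pneq : ℝ)
    (hp10 : p10 = ψ true false)
    (hp11 : p11 = ψ true true)
    (hpZ : pZ = ψ false true + ψ true true)
    (hPneq : Pneq = ∑ x : Bool, ∑ y : Bool, ∑ z : Bool, ψ x z * ψ y (!z))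
    (hpZ0 : 0 < pZ) (hpZ1 : pZ < 1) :
    (∑ z : Bool, ψ true z * ψ true (!z)) / Pneq -
        ((∑ z : Bool, ψ true z * (∑ x : Bool, ψ x (!z))) / Pneq) *
          ((∑ z : Bool, (∑ x : Bool, ψ x z) * ψ true (!z)) / Pneq) =
      -((p11 * (1 - pZ) - p10 * pZ) ^ 2) / (2 * pZ * (1 - pZ)) ^ 2 ∧
    (∑ z : Bool, ψ true z * ψ true (!z)) / Pneq -
        ((∑ z : Bool, ψ true z * (∑ x : Bool, ψ x (!z))) / Pneq) *
          ((∑ z : Bool, (∑ x : Bool, ψ x z) * ψ true (!z)) / Pneq) ≤ 0 :=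
  cond_cov_odd_general ψ hsum p10 p11 pZ Pneq hp10 hp11 hpZ hPneq
end
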